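/- Let X be a solution of the inviscid dyadic model on [0,T), let j ≥ 1 and let 0 ≤ s ≤ t < T. If X_j(s) ≥ 0 then X_j(t) ≥ 0. -/

import Mathlib

open MeasureTheory Set Filter Topology

/-- `X` is a solution of the inviscid dyadic model on the time set `D`
(typically `Set.Ico 0 T` or `Set.Ici 0`), with coefficients `k` bounded by `C * 2 ^ n`.
The components of the solution are `X 1, X 2, ...`; by convention `X 0 ≡ 0` and `k 0 = 0`. -/
def IsDyadicSolutionOn (C : ℝ) (k : ℕ → ℝ) (X : ℕ → ℝ → ℝ) (D : Set ℝ) : Prop :=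
  0 < C ∧ k 0 = 0 ∧
  (∀ n : ℕ, 1 ≤ n → 0 ≤ k n ∧ k n ≤ C * 2 ^ n) ∧
  (∀ t : ℝ, X 0 t = 0) ∧
  (∀ n : ℕ, 1 ≤ n → ∀ t ∈ D, HasDerivWithinAt (X n)
      (k (n - 1) * X (n - 1) t ^ 2 - k n * X n t * X (n + 1) t) D t) ∧
  (∀ t ∈ D, Summable fun j : ℕ => X (j + 1) t ^ 2)

/-- The energy `E(t) = ∑_{j ≥ 1} X_j(t)^2`. -/
noncomputable def energy (X : ℕ → ℝ → ℝ) (t : ℝ) : ℝ :=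
  ∑' j : ℕ, X (j + 1) t ^ 2

/-- The function `a(t) = sup_{n ≥ 1} (- k_n X_{n+1}(t))`. -/
noncomputable def classKfun (k : ℕ → ℝ) (X : ℕ → ℝ → ℝ) (t : ℝ) : ℝ :=
  ⨆ n : ℕ, -(k (n + 1) * X (n + 2) t)

/-- A solution is of class `K` if `a(t) = sup_{n ≥ 1} (- k_n X_{n+1}(t))` is locally
integrable on `[0,∞)`. -/
def IsClassK (k : ℕ → ℝ) (X : ℕ → ℝ → ℝ) : Prop :=
  LocallyIntegrableOn (classKfun k X) (Set.Ici 0)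

/-! The equation for `X_j` reads `X_j' = c - g X_j` with source `c = k_{j-1} X_{j-1}^2 ≥ 0` and
`g = k_j X_{j+1}` continuous, so with the integrating factor `exp (∫ g)` the product
`X_j · exp (∫ g)` is nondecreasing and keeps the sign of `X_j(s)`. -/

theorem monotoneOn_mul_exp_integral {f f' g : ℝ → ℝ} {a b : ℝ} (hab : a ≤ b)
    (hf : ContinuousOn f (Icc a b)) (hg : ContinuousOn g (Icc a b))
    (hf' : ∀ x ∈ Ioo a b, HasDerivAt f (f' x) x)
    (hineq : ∀ x ∈ Ioo a b, 0 ≤ f' x + g x * f x) :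
    MonotoneOn (fun x => f x * Real.exp (∫ y in a..x, g y)) (Icc a b) := by
  set G : ℝ → ℝ := fun x => ∫ y in a..x, g y
  have hG_cont : ContinuousOn G (Icc a b) := by
    have := intervalIntegral.continuousOn_primitive_interval (μ := volume) (a := a) (b := b)
      (by rw [uIcc_of_le hab]; exact hg.integrableOn_Icc)
    rwa [uIcc_of_le hab] at this
  have hF_deriv : ∀ x ∈ Ioo a b, HasDerivAt (fun x => f x * Real.exp (G x))
      ((f' x + g x * f x) * Real.exp (G x)) x := by
    intro x hx
    have hgx : ContinuousAt g x := hg.continuousAt (Icc_mem_nhds hx.1 hx.2)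
    have hG : HasDerivAt G (g x) x := intervalIntegral.integral_hasDerivAt_right
      ((hg.mono (Icc_subset_Icc_right hx.2.le)).intervalIntegrable_of_Icc hx.1.le)
      ((hg.mono Ioo_subset_Icc_self).stronglyMeasurableAtFilter isOpen_Ioo x hx) hgx
    exact ((hf' x hx).mul hG.exp).congr_deriv (by ring)
  refine monotoneOn_of_deriv_nonneg (convex_Icc a b)
    (hf.mul (Real.continuous_exp.comp_continuousOn hG_cont)) ?_ ?_ <;> rw [interior_Icc]
  · exact fun x hx => (hF_deriv x hx).differentiableAt.differentiableWithinAt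
  · intro x hx
    rw [(hF_deriv x hx).deriv]
    exact mul_nonneg (hineq x hx) (Real.exp_pos _).le

theorem nonneg_of_deriv_add_mul_nonneg {f f' g : ℝ → ℝ} {a b : ℝ} (hab : a ≤ b)
    (hf : ContinuousOn f (Icc a b)) (hg : ContinuousOn g (Icc a b))
    (hf' : ∀ x ∈ Ioo a b, HasDerivAt f (f' x) x)
    (hineq : ∀ x ∈ Ioo a b, 0 ≤ f' x + g x * f x) (ha : 0 ≤ f a) : 0 ≤ f b := by
  have hmono := monotoneOn_mul_exp_integral hab hf hg hf' hineq
    (left_mem_Icc.mpr hab) (right_mem_Icc.mpr hab) hab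
  simp only [intervalIntegral.integral_same, Real.exp_zero, mul_one] at hmono
  exact nonneg_of_mul_nonneg_left (ha.trans hmono) (Real.exp_pos _)

namespace IsDyadicSolutionOn

variable {C : ℝ} {k : ℕ → ℝ} {X : ℕ → ℝ → ℝ} {D : Set ℝ}

theorem coeff_nonneg (hX : IsDyadicSolutionOn C k X D) (n : ℕ) : 0 ≤ k n := by
  rcases Nat.eq_zero_or_pos n with rfl | hn
  · exact hX.2.1.ge
  · exact (hX.2.2.1 n hn).1

theorem continuousOn (hX : IsDyadicSolutionOn C k X D) {n : ℕ} (hn : 1 ≤ n) :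
    ContinuousOn (X n) D :=
  fun x hx => (hX.2.2.2.2.1 n hn x hx).continuousWithinAt

theorem hasDerivAt (hX : IsDyadicSolutionOn C k X D) {n : ℕ} (hn : 1 ≤ n) {x : ℝ}
    (hx : x ∈ interior D) :
    HasDerivAt (X n) (k (n - 1) * X (n - 1) x ^ 2 - k n * X n x * X (n + 1) x) x :=
  (hX.2.2.2.2.1 n hn x (interior_subset hx)).hasDerivAt (mem_interior_iff_mem_nhds.mp hx)

end IsDyadicSolutionOn

/-- nonnegativity of a component is preserved forward in time. -/
theorem component_nonneg_invariant
    (C : ℝ) (k : ℕ → ℝ) (X : ℕ → ℝ → ℝ) (T : ℝ)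
    (hX : IsDyadicSolutionOn C k X (Set.Ico 0 T))
    (j : ℕ) (hj : 1 ≤ j) (s t : ℝ) (hs : 0 ≤ s) (hst : s ≤ t) (ht : t < T)
    (hsign : 0 ≤ X j s) :
    0 ≤ X j t := by
  have hIcc : Icc s t ⊆ Ico 0 T := Icc_subset_Ico hs ht
  have hIoo : Ioo s t ⊆ interior (Ico 0 T) := by
    rw [interior_Ico]
    exact Ioo_subset_Ioo hs ht.le
  refine nonneg_of_deriv_add_mul_nonneg (g := fun u => k j * X (j + 1) u) hst
    ((hX.continuousOn hj).mono hIcc) (((hX.continuousOn (by omega)).const_mul (k j)).mono hIcc)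
    (fun u hu => hX.hasDerivAt hj (hIoo hu)) (fun u _ => ?_) hsign
  have hsource := mul_nonneg (hX.coeff_nonneg (j - 1)) (sq_nonneg (X (j - 1) u))
  linarith
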